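/- Let Ω ⊆ ℂⁿ be open, let Φ : Ω → ℝ be twice continuously real-differentiable, and let x₀ ∈ Ω be such that the Levi form L_Φ(x₀) is positive definite. Then there exist an open neighborhood V ⊆ Ω of x₀ and δ > 0 such that for all x, y ∈ V one has Φ(y) − Im((x−y)·θ(x,y)) ≤ Φ(x) − δ|x−y|². -/

import Mathlib

open Complex MeasureTheory

noncomputable section

/-- `ℂⁿ` with its Euclidean (Hermitian) norm. -/
abbrev En (n : ℕ) := EuclideanSpace ℂ (Fin n)

/-- The second real Fréchet derivative `D²Φ(y)(ξ,η)`. -/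
def D2R (n : ℕ) (Φ : En n → ℝ) (y ξ η : En n) : ℝ :=
  fderiv ℝ (fderiv ℝ Φ) y ξ η

/-- The Levi form `L_Φ(y)(ξ) = (1/4)(D²Φ(y)(ξ,ξ) + D²Φ(y)(iξ,iξ))`. -/
def Levi (n : ℕ) (Φ : En n → ℝ) (y ξ : En n) : ℝ :=
  (1/4) * (D2R n Φ y ξ ξ + D2R n Φ y (Complex.I • ξ) (Complex.I • ξ))

/-- The Wirtinger differential `A_Φ(y)(ξ) = (1/2)(DΦ(y)(ξ) − i·DΦ(y)(iξ))`. -/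
def Aform (n : ℕ) (Φ : En n → ℝ) (y ξ : En n) : ℂ :=
  (1/2 : ℂ) * ((fderiv ℝ Φ y ξ : ℂ) - Complex.I * (fderiv ℝ Φ y (Complex.I • ξ) : ℂ))

/-- The holomorphic Hessian
`B_Φ(y)(ξ,η) = (1/4)(D²Φ(y)(ξ,η) − D²Φ(y)(iξ,iη)) − (i/4)(D²Φ(y)(ξ,iη) + D²Φ(y)(iξ,η))`. -/
def Bform (n : ℕ) (Φ : En n → ℝ) (y ξ η : En n) : ℂ :=
  (1/4 : ℂ) * ((D2R n Φ y ξ η : ℂ) - (D2R n Φ y (Complex.I • ξ) (Complex.I • η) : ℂ))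
    - (Complex.I/4) * ((D2R n Φ y ξ (Complex.I • η) : ℂ) + (D2R n Φ y (Complex.I • ξ) η : ℂ))

/-- `(x−y)·θ(x,y) = −2i(A_Φ(y)(x−y) + (1/2)B_Φ(y)(x−y, x−y))`. -/
def dotTheta (n : ℕ) (Φ : En n → ℝ) (x y : En n) : ℂ :=
  (-2) * Complex.I * (Aform n Φ y (x - y) + (1/2 : ℂ) * Bform n Φ y (x - y) (x - y))

/-!
Write `h = x - y`. Expanding the definitions,
`Φ(y) − Im((x−y)·θ(x,y)) = Φ(y) + DΦ(y)h + D²Φ(y)(h,h)/4 − D²Φ(y)(ih,ih)/4`, while Taylor's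
formula along the segment `[y, x]` gives `Φ(x) ≥ Φ(y) + DΦ(y)h + D²Φ(z)(h,h)/2` for some `z` on
it. The difference is therefore at least `D²Φ(y)(h,h)/4 + D²Φ(y)(ih,ih)/4 = L_Φ(y)(h)` up to
errors controlled by the oscillation of `D²Φ`, and by continuity of `D²Φ` these errors are
absorbed, near `x₀`, by half the coercivity constant of the positive definite form `L_Φ(x₀)`.
-/

lemma monotoneOn_Icc_of_hasDerivAt_nonneg {f f' : ℝ → ℝ} {a b : ℝ}
    (hf : ∀ t ∈ Set.Icc a b, HasDerivAt f (f' t) t) (hf' : ∀ t ∈ Set.Icc a b, 0 ≤ f' t) :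
    MonotoneOn f (Set.Icc a b) :=
  monotoneOn_of_hasDerivWithinAt_nonneg (convex_Icc a b)
    (fun t ht => (hf t ht).continuousAt.continuousWithinAt)
    (fun t ht => (hf t (interior_subset ht)).hasDerivWithinAt)
    (fun t ht => hf' t (interior_subset ht))

lemma add_add_half_le_of_le_deriv_deriv {g g' g'' : ℝ → ℝ} {M : ℝ}
    (hg : ∀ t ∈ Set.Icc (0 : ℝ) 1, HasDerivAt g (g' t) t)
    (hg' : ∀ t ∈ Set.Icc (0 : ℝ) 1, HasDerivAt g' (g'' t) t)
    (hM : ∀ t ∈ Set.Icc (0 : ℝ) 1, M ≤ g'' t) :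
    g 0 + g' 0 + M / 2 ≤ g 1 := by
  have h0 : (0 : ℝ) ∈ Set.Icc (0 : ℝ) 1 := Set.left_mem_Icc.mpr zero_le_one
  have h1 : (1 : ℝ) ∈ Set.Icc (0 : ℝ) 1 := Set.right_mem_Icc.mpr zero_le_one
  have hslope : ∀ t ∈ Set.Icc (0 : ℝ) 1, g' 0 + M * t ≤ g' t := by
    have hmono : MonotoneOn (fun t => g' t - M * t) (Set.Icc 0 1) :=
      monotoneOn_Icc_of_hasDerivAt_nonneg (f' := fun t => g'' t - M)
        (fun t ht => ((hg' t ht).sub ((hasDerivAt_id t).const_mul M)).congr_deriv (by simp))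
        (fun t ht => sub_nonneg.mpr (hM t ht))
    intro t ht
    have := hmono h0 ht ht.1
    simp only [mul_zero, sub_zero] at this
    linarith
  have hmono : MonotoneOn (fun t => g t - g' 0 * t - M * t ^ 2 / 2) (Set.Icc 0 1) :=
    monotoneOn_Icc_of_hasDerivAt_nonneg (f' := fun t => g' t - g' 0 - M * t)
      (fun t ht => (((hg t ht).sub ((hasDerivAt_id t).const_mul (g' 0))).sub
        (((hasDerivAt_pow 2 t).const_mul M).div_const 2)).congr_deriv (by simp; ring))
      (fun t ht => by linarith [hslope t ht])
  have := hmono h0 h1 zero_le_one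
  norm_num at this
  linarith

lemma add_add_half_le_of_le_hessian {E : Type*} [NormedAddCommGroup E] [NormedSpace ℝ E]
    {f : E → ℝ} {f' : E → E →L[ℝ] ℝ} {f'' : E → E →L[ℝ] E →L[ℝ] ℝ} {s : Set E}
    (hs : Convex ℝ s) (hf : ∀ z ∈ s, HasFDerivAt f (f' z) z)
    (hf' : ∀ z ∈ s, HasFDerivAt f' (f'' z) z) {x y : E} (hx : x ∈ s) (hy : y ∈ s) {M : ℝ}
    (hM : ∀ z ∈ s, M ≤ f'' z (x - y) (x - y)) :
    f y + f' y (x - y) + M / 2 ≤ f x := by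
  set h := x - y
  have hseg : ∀ t ∈ Set.Icc (0 : ℝ) 1, y + t • h ∈ s := fun t ht => by
    convert hs.lineMap_mem hy hx ht using 1
    rw [AffineMap.lineMap_apply_module']
    abel
  have hline : ∀ t : ℝ, HasDerivAt (fun t : ℝ => y + t • h) h t := fun t => by
    simpa using ((hasDerivAt_id t).smul_const h).const_add y
  have key := add_add_half_le_of_le_deriv_deriv
    (g := fun t => f (y + t • h)) (g' := fun t => f' (y + t • h) h)
    (g'' := fun t => f'' (y + t • h) h h)
    (fun t ht => (hf _ (hseg t ht)).comp_hasDerivAt t (hline t))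
    (fun t ht => by
      have hd : HasDerivAt (fun t : ℝ => f' (y + t • h)) (f'' (y + t • h) h) t :=
        (hf' _ (hseg t ht)).comp_hasDerivAt t (hline t)
      simpa using hd.clm_apply (hasDerivAt_const t h))
    (fun t ht => hM _ (hseg t ht))
  simpa [h] using key

lemma exists_pos_mul_sq_norm_le_of_pos {E : Type*} [NormedAddCommGroup E] [NormedSpace ℝ E]
    [ProperSpace E] {Q : E → ℝ} (hQ : Continuous Q) (hsmul : ∀ (r : ℝ) ξ, Q (r • ξ) = r ^ 2 * Q ξ)
    (hpos : ∀ ξ, ξ ≠ 0 → 0 < Q ξ) :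
    ∃ c, 0 < c ∧ ∀ ξ, c * ‖ξ‖ ^ 2 ≤ Q ξ := by
  have hQ0 : Q 0 = 0 := by simpa using hsmul 0 0
  rcases subsingleton_or_nontrivial E with hE | hE
  · refine ⟨1, one_pos, fun ξ => ?_⟩
    simp [Subsingleton.elim ξ 0, hQ0]
  obtain ⟨u, hu, humin⟩ := (isCompact_sphere (0 : E) 1).exists_isMinOn
    (NormedSpace.sphere_nonempty.mpr zero_le_one) hQ.continuousOn
  have hu0 : u ≠ 0 := ne_zero_of_mem_unit_sphere ⟨u, hu⟩
  refine ⟨Q u, hpos u hu0, fun ξ => ?_⟩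
  rcases eq_or_ne ξ 0 with rfl | hξ
  · simp [hQ0]
  have hnξ : ‖ξ‖ ≠ 0 := norm_ne_zero_iff.mpr hξ
  have hmem : ‖ξ‖⁻¹ • ξ ∈ Metric.sphere (0 : E) 1 := by
    simp [norm_smul, hnξ]
  calc Q u * ‖ξ‖ ^ 2 ≤ Q (‖ξ‖⁻¹ • ξ) * ‖ξ‖ ^ 2 := by gcongr; exact humin hmem
    _ = Q ξ := by rw [hsmul, inv_pow, mul_comm, ← mul_assoc, mul_inv_cancel₀ (by positivity),
      one_mul]

lemma abs_apply_apply_sub_apply_apply_le {E : Type*} [NormedAddCommGroup E] [NormedSpace ℝ E]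
    (B B₀ : E →L[ℝ] E →L[ℝ] ℝ) (v : E) : |B v v - B₀ v v| ≤ ‖B - B₀‖ * ‖v‖ ^ 2 := by
  rw [← Real.norm_eq_abs, sq, ← mul_assoc]
  exact (B - B₀).le_opNorm₂ v v

lemma Levi_smul (n : ℕ) (Φ : En n → ℝ) (y : En n) (r : ℝ) (ξ : En n) :
    Levi n Φ y (r • ξ) = r ^ 2 * Levi n Φ y ξ := by
  simp only [Levi, D2R, smul_comm Complex.I r ξ, map_smul, _root_.smul_apply,
    smul_eq_mul]
  ring

lemma continuous_Levi (n : ℕ) (Φ : En n → ℝ) (y : En n) : Continuous (Levi n Φ y) := by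
  unfold Levi D2R
  fun_prop

lemma im_dotTheta (n : ℕ) (Φ : En n → ℝ) (x y : En n) :
    (dotTheta n Φ x y).im = -fderiv ℝ Φ y (x - y) - D2R n Φ y (x - y) (x - y) / 4
      + D2R n Φ y (Complex.I • (x - y)) (Complex.I • (x - y)) / 4 := by
  simp [dotTheta, Aform, Bform, Complex.mul_im, Complex.mul_re]
  ring

lemma sub_im_dotTheta_le {n : ℕ} {Φ : En n → ℝ} {s : Set (En n)} (hs : Convex ℝ s)
    (hΦ : ∀ z ∈ s, HasFDerivAt Φ (fderiv ℝ Φ z) z)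
    (hΦ' : ∀ z ∈ s, HasFDerivAt (fderiv ℝ Φ) (fderiv ℝ (fderiv ℝ Φ) z) z) {x₀ : En n} {ε : ℝ}
    (hε : ∀ z ∈ s, ‖fderiv ℝ (fderiv ℝ Φ) z - fderiv ℝ (fderiv ℝ Φ) x₀‖ ≤ ε)
    {x y : En n} (hx : x ∈ s) (hy : y ∈ s) :
    Φ y - (dotTheta n Φ x y).im ≤ Φ x - (Levi n Φ x₀ (x - y) - ε * ‖x - y‖ ^ 2) := by
  set h := x - y
  have hclose : ∀ z ∈ s, ∀ v, |D2R n Φ z v v - D2R n Φ x₀ v v| ≤ ε * ‖v‖ ^ 2 :=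
    fun z hz v => (abs_apply_apply_sub_apply_apply_le _ _ v).trans
      (mul_le_mul_of_nonneg_right (hε z hz) (sq_nonneg _))
  have htaylor := add_add_half_le_of_le_hessian hs hΦ hΦ' hx hy
    (M := D2R n Φ x₀ h h - ε * ‖h‖ ^ 2)
    (fun z hz => by
      change _ ≤ D2R n Φ z h h
      linarith [(abs_le.mp (hclose z hz h)).1])
  have hreal := abs_le.mp (hclose y hy h)
  have himag := abs_le.mp (hclose y hy (Complex.I • h))
  rw [norm_smul, Complex.norm_I, one_mul] at himag
  rw [im_dotTheta, Levi]
  linarith [hreal.1, hreal.2, himag.1, himag.2]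

theorem statement0 (n : ℕ)
    (Ω : Set (En n)) (hΩ : IsOpen Ω)
    (Φ : En n → ℝ) (hΦ : ContDiffOn ℝ 2 Φ Ω)
    (x₀ : En n) (hx₀ : x₀ ∈ Ω)
    (hLevi : ∀ ξ : En n, ξ ≠ 0 → 0 < Levi n Φ x₀ ξ) :
    ∃ V : Set (En n), IsOpen V ∧ x₀ ∈ V ∧ V ⊆ Ω ∧
      ∃ δ : ℝ, 0 < δ ∧ ∀ x ∈ V, ∀ y ∈ V,
        Φ y - (dotTheta n Φ x y).im ≤ Φ x - δ * ‖x - y‖ ^ 2 := by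
  have hΦ' : ContDiffOn ℝ 1 (fderiv ℝ Φ) Ω := hΦ.fderiv_of_isOpen hΩ (by norm_num)
  obtain ⟨c, hc, hcoer⟩ := exists_pos_mul_sq_norm_le_of_pos (continuous_Levi n Φ x₀)
    (Levi_smul n Φ x₀) hLevi
  have hnear : ∀ᶠ z in nhds x₀,
      z ∈ Ω ∧ ‖fderiv ℝ (fderiv ℝ Φ) z - fderiv ℝ (fderiv ℝ Φ) x₀‖ < c / 2 :=
    (hΩ.eventually_mem hx₀).and <| by
      simpa only [Metric.mem_ball, dist_eq_norm] using
        ((hΦ'.continuousOn_fderiv_of_isOpen hΩ le_rfl).continuousAt (hΩ.mem_nhds hx₀)).eventually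
          (Metric.ball_mem_nhds _ (half_pos hc))
  obtain ⟨r, hr, hball⟩ := Metric.eventually_nhds_iff_ball.mp hnear
  have hballΩ : Metric.ball x₀ r ⊆ Ω := fun z hz => (hball z hz).1
  refine ⟨Metric.ball x₀ r, Metric.isOpen_ball, Metric.mem_ball_self hr, hballΩ,
    c / 2, half_pos hc, fun x hx y hy => ?_⟩
  have key := sub_im_dotTheta_le (convex_ball x₀ r)
    (fun z hz => ((hΦ.differentiableOn two_ne_zero).differentiableAt
      (hΩ.mem_nhds (hballΩ hz))).hasFDerivAt)
    (fun z hz => ((hΦ'.differentiableOn one_ne_zero).differentiableAt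
      (hΩ.mem_nhds (hballΩ hz))).hasFDerivAt)
    (fun z hz => (hball z hz).2.le) hx hy
  linarith [hcoer (x - y)]

end
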